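/- The composition T = P ∥ Q satisfies constraint 4 (single output subexpression per state): for each state (s_P,s_Q) of T, all transitions from (s_P,s_Q) have labels with the same output subexpression θ(y_P)·θ(y_Q) ∈ Conj(T.E \ T.I), provided P and Q are composable (in particular, at most one of them violates constraint 4, and the violating system has all its outputs shared with the other and no inputs from the other). -/

import Mathlib

open Classical

noncomputable section

abbrev BExpr (E : Type) := (E → Bool) → Bool

def DependsOn' {E : Type} (l : BExpr E) (V : Set E) : Prop :=
  ∀ σ τ : E → Bool, (∀ a ∈ V, σ a = τ a) → l σ = l τ

def IsFullConj {E : Type} (l : BExpr E) (V : Set E) : Prop :=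
  ∃ p : E → Bool, ∀ σ : E → Bool, (l σ = true ↔ ∀ a ∈ V, σ a = p a)

def Matches' {E : Type} (I : Set E) (l : BExpr E) (A : Set E) : Prop :=
  ∃ σ : E → Bool, (∀ a ∈ I, (σ a = true ↔ a ∈ A)) ∧ l σ = true

def Sat {E : Type} (l : BExpr E) : Prop := ∃ σ, l σ = true

structure TS (E : Type) where
  S : Type
  i : S
  Ev : Set E
  I : Set E
  Tran : Set (S × BExpr E × S)

namespace TS

variable {E : Type}

/-- Constraint 1: determinism/totality of matching. -/
def C1 (T : TS E) : Prop :=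
  ∀ s : T.S, ∀ A : Set E, A ⊆ T.I →
    ∃! t : BExpr E × T.S, ((s, t.1, t.2) ∈ T.Tran ∧ Matches' T.I t.1 A)

/-- Constraint 2: every label has the form x·y, x ∈ Bool(I), y ∈ Conj(E∖I). -/
def C2 (T : TS E) : Prop :=
  ∀ ⦃s : T.S⦄ ⦃l : BExpr E⦄ ⦃s' : T.S⦄, (s, l, s') ∈ T.Tran →
    ∃ x y : BExpr E, DependsOn' x T.I ∧ IsFullConj y (T.Ev \ T.I) ∧
      ∀ σ, l σ = (x σ && y σ)

inductive Reach (T : TS E) : T.S → Prop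
  | init : Reach T T.i
  | step {s : T.S} {l : BExpr E} {s' : T.S} :
      Reach T s → (s, l, s') ∈ T.Tran → Sat l → Reach T s'

/-- Constraint 3: all states reachable. -/
def C3 (T : TS E) : Prop := ∀ s : T.S, Reach T s

/-- Constraint 4: a single output subexpression per state. -/
def C4 (T : TS E) : Prop :=
  ∀ s : T.S, ∃ y : BExpr E, IsFullConj y (T.Ev \ T.I) ∧
    ∀ ⦃l : BExpr E⦄ ⦃s' : T.S⦄, (s, l, s') ∈ T.Tran →
      ∃ x : BExpr E, DependsOn' x T.I ∧ ∀ σ, l σ = (x σ && y σ)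

def WF (T : TS E) : Prop := T.I ⊆ T.Ev

/-- θ / hiding of shared variables: existentially quantify them away. -/
def hide (H : Set E) (l : BExpr E) : BExpr E :=
  fun σ => decide (∃ τ : E → Bool, (∀ a ∉ H, τ a = σ a) ∧ l τ = true)

/-- Product T' = P × Q. -/
def prod (P Q : TS E) : TS E where
  S := P.S × Q.S
  i := (P.i, Q.i)
  Ev := P.Ev ∪ Q.Ev
  I := P.I ∪ Q.I
  Tran := { t | ∃ lP lQ : BExpr E,
      (t.1.1, lP, t.2.2.1) ∈ P.Tran ∧ (t.1.2, lQ, t.2.2.2) ∈ Q.Tran ∧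
      t.2.1 = fun σ => lP σ && lQ σ }

/-- Composition T = P ∥ Q: satisfiable product transitions with shared events hidden. -/
def comp (P Q : TS E) : TS E where
  S := P.S × Q.S
  i := (P.i, Q.i)
  Ev := (P.Ev ∪ Q.Ev) \ (P.Ev ∩ Q.Ev)
  I := (P.I ∪ Q.I) \ (P.Ev ∩ Q.Ev)
  Tran := { t | ∃ lP lQ : BExpr E,
      (t.1.1, lP, t.2.2.1) ∈ P.Tran ∧ (t.1.2, lQ, t.2.2.2) ∈ Q.Tran ∧
      Sat (fun σ => lP σ && lQ σ) ∧
      t.2.1 = hide (P.Ev ∩ Q.Ev) (fun σ => lP σ && lQ σ) }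

/-- Condition D: every shared event is an input of exactly one of the systems. -/
def SharedOK (P Q : TS E) : Prop :=
  ∀ a ∈ P.Ev ∩ Q.Ev, (a ∈ P.I ∧ a ∉ Q.I) ∨ (a ∈ Q.I ∧ a ∉ P.I)

def Composable (P Q : TS E) : Prop :=
  P.WF ∧ Q.WF ∧ P.C1 ∧ P.C2 ∧ P.C3 ∧ Q.C1 ∧ Q.C2 ∧ Q.C3 ∧ SharedOK P Q ∧
  (P.C4 ∨ Q.C4) ∧
  (¬ P.C4 → P.Ev ∩ Q.Ev = P.Ev \ P.I) ∧
  (¬ Q.C4 → P.Ev ∩ Q.Ev = Q.Ev \ Q.I)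

/-- A run of the system under input sequence A. -/
def Run (T : TS E) (A : ℕ → Set E) (r : ℕ → T.S) : Prop :=
  r 0 = T.i ∧ ∀ n : ℕ, ∃ l : BExpr E,
    (r n, l, r (n + 1)) ∈ T.Tran ∧ Matches' T.I l (A n)

/-- Output event e occurs at time t of the run. -/
def EmitsAt (T : TS E) (A : ℕ → Set E) (r : ℕ → T.S) (e : E) (t : ℕ) : Prop :=
  ∃ l : BExpr E, (r t, l, r (t + 1)) ∈ T.Tran ∧ Matches' T.I l (A t) ∧
    ∀ σ : E → Bool, l σ = true → σ e = true

end TS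

/-!
Hiding the shared events preserves the fact that a product label depends only on the events
of the composition, and every output of `P ∥ Q` is an unshared output of `P` or of `Q`. At a
given state, a component satisfying constraint 4 forces one fixed pattern on its outputs, while
a component violating it has no unshared outputs at all. So every label leaving a state of
`P ∥ Q` forces one pattern `p` on the outputs of `P ∥ Q`, and overwriting those outputs by `p`
splits the label as `x · y` with `y` the full conjunction of `p`.
-/

section DependsOn

variable {E : Type} {l m : BExpr E} {V W : Set E}

lemma DependsOn'.mono (hl : DependsOn' l V) (hVW : V ⊆ W) : DependsOn' l W :=
  fun σ τ h => hl σ τ fun a ha => h a (hVW ha)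

lemma DependsOn'.and (hl : DependsOn' l V) (hm : DependsOn' m V) :
    DependsOn' (fun σ => l σ && m σ) V :=
  fun σ τ h => show (l σ && m σ) = (l τ && m τ) by rw [hl σ τ h, hm σ τ h]

lemma IsFullConj.dependsOn (hl : IsFullConj l V) : DependsOn' l V := by
  obtain ⟨p, hp⟩ := hl
  intro σ τ h
  rw [Bool.eq_iff_iff, hp, hp]
  exact forall₂_congr fun a ha => by rw [h a ha]

lemma DependsOn'.hide (hl : DependsOn' l W) (H : Set E) : DependsOn' (TS.hide H l) (W \ H) := by
  suffices key : ∀ σ τ : E → Bool, (∀ a ∈ W \ H, σ a = τ a) →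
      TS.hide H l σ = true → TS.hide H l τ = true from
    fun σ τ h => Bool.eq_iff_iff.mpr ⟨key σ τ h, key τ σ fun a ha => (h a ha).symm⟩
  intro σ τ hστ hσ
  obtain ⟨ρ, hρ, hlρ⟩ := of_decide_eq_true hσ
  -- keep the witness on the hidden events and follow `τ` elsewhere
  refine decide_eq_true ⟨H.piecewise ρ τ, fun a ha => H.piecewise_eq_of_notMem _ _ ha, ?_⟩
  rw [← hlρ]
  refine hl _ _ fun a ha => ?_
  by_cases haH : a ∈ H
  · exact H.piecewise_eq_of_mem _ _ haH
  · rw [H.piecewise_eq_of_notMem _ _ haH, ← hστ a ⟨ha, haH⟩, hρ a haH]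

lemma exists_dependsOn_and_fullConj {O : Set E} (p : E → Bool)
    (hl : DependsOn' l (O ∪ V)) (hp : ∀ σ, l σ = true → ∀ a ∈ O, σ a = p a) :
    ∃ x : BExpr E, DependsOn' x V ∧ ∀ σ, l σ = (x σ && decide (∀ a ∈ O, σ a = p a)) := by
  -- `x` reads `l` after overwriting the events of `O` by `p`
  refine ⟨fun σ => l (O.piecewise p σ), fun σ τ h => hl _ _ fun a ha => ?_, fun σ => ?_⟩
  · by_cases haO : a ∈ O
    · simp [haO]
    · simp [haO, h a (ha.resolve_left haO)]
  · by_cases hσ : ∀ a ∈ O, σ a = p a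
    · have hfix : O.piecewise p σ = σ := by
        funext a
        by_cases haO : a ∈ O <;> simp [haO, hσ]
      simp only [hfix, decide_eq_true hσ, Bool.and_true]
    · have hlσ : l σ ≠ true := fun h => hσ (hp σ h)
      simpa [hσ] using hlσ

end DependsOn

namespace TS

variable {E : Type}

def Forces (T : TS E) (s : T.S) (V : Set E) (p : E → Bool) : Prop :=
  ∀ ⦃l : BExpr E⦄ ⦃s' : T.S⦄, (s, l, s') ∈ T.Tran → ∀ σ, l σ = true → ∀ a ∈ V, σ a = p a

lemma Forces.mono {T : TS E} {s : T.S} {V W : Set E} {p : E → Bool}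
    (h : T.Forces s V p) (hWV : W ⊆ V) : T.Forces s W p :=
  fun _ _ ht σ hσ a ha => h ht σ hσ a (hWV ha)

lemma C4.exists_forces {T : TS E} (h : T.C4) (s : T.S) :
    ∃ p, T.Forces s (T.Ev \ T.I) p := by
  obtain ⟨y, ⟨p, hp⟩, hy⟩ := h s
  refine ⟨p, fun l s' ht σ hσ => (hp σ).mp ?_⟩
  obtain ⟨x, -, hl⟩ := hy ht
  rw [hl] at hσ
  exact (Bool.and_eq_true _ _ ▸ hσ).2

lemma exists_forces_outputs_sdiff {T : TS E} {H : Set E} (h : T.C4 ∨ H = T.Ev \ T.I)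
    (s : T.S) : ∃ p, T.Forces s ((T.Ev \ T.I) \ H) p := by
  rcases h with h | rfl
  · obtain ⟨p, hp⟩ := h.exists_forces s
    exact ⟨p, hp.mono Set.sdiff_subset⟩
  · exact ⟨fun _ => true, fun _ _ _ _ _ a ha => absurd ha.1 ha.2⟩

lemma C2.dependsOn {T : TS E} (h : T.C2) {s s' : T.S} {l : BExpr E}
    (ht : (s, l, s') ∈ T.Tran) : DependsOn' l (T.Ev ∪ T.I) := by
  obtain ⟨x, y, hx, hy, hl⟩ := h ht
  rw [show l = fun σ => x σ && y σ from funext hl]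
  exact (hx.mono Set.subset_union_right).and
    (hy.dependsOn.mono (Set.sdiff_subset.trans Set.subset_union_left))

lemma mem_comp_outputs {P Q : TS E} {a : E} (ha : a ∈ (comp P Q).Ev \ (comp P Q).I) :
    a ∉ P.Ev ∩ Q.Ev ∧ (a ∈ P.Ev \ P.I ∨ a ∈ Q.Ev \ Q.I) := by
  simp only [comp, Set.mem_sdiff, Set.mem_union, Set.mem_inter_iff] at ha ⊢
  tauto

theorem comp_C4 {P Q : TS E} (hP2 : P.C2) (hQ2 : Q.C2)
    (hP : ∀ s, ∃ p, P.Forces s ((P.Ev \ P.I) \ (P.Ev ∩ Q.Ev)) p)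
    (hQ : ∀ s, ∃ p, Q.Forces s ((Q.Ev \ Q.I) \ (P.Ev ∩ Q.Ev)) p) : (comp P Q).C4 := by
  intro s
  obtain ⟨pP, hpP⟩ := hP s.1
  obtain ⟨pQ, hpQ⟩ := hQ s.2
  refine ⟨_, ⟨(P.Ev \ P.I).piecewise pP pQ, fun σ => decide_eq_true_iff⟩, ?_⟩
  rintro _ s' ⟨lP, lQ, htP, htQ, -, rfl⟩
  apply exists_dependsOn_and_fullConj
  · refine (((hP2.dependsOn htP).mono Set.subset_union_left).and
      ((hQ2.dependsOn htQ).mono Set.subset_union_right)).hide _ |>.mono fun a ha => ?_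
    simp only [comp, Set.mem_sdiff, Set.mem_union, Set.mem_inter_iff] at ha ⊢
    tauto
  · intro σ hσ a ha
    obtain ⟨τ, hτσ, hτ⟩ := of_decide_eq_true hσ
    rw [Bool.and_eq_true] at hτ
    obtain ⟨haH, haPQ⟩ := mem_comp_outputs ha
    -- outputs of the composition are not hidden, so `σ` and the witness `τ` agree there
    rw [← hτσ a haH]
    by_cases haP : a ∈ P.Ev \ P.I
    · rw [Set.piecewise_eq_of_mem _ _ _ haP]
      exact hpP htP τ hτ.1 a ⟨haP, haH⟩
    · rw [Set.piecewise_eq_of_notMem _ _ _ haP]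
      exact hpQ htQ τ hτ.2 a ⟨haPQ.resolve_left haP, haH⟩

end TS

/-- the composition of composable systems satisfies constraint 4. -/
theorem stmt7 {E : Type} (P Q : TS E) (h : TS.Composable P Q) :
    (TS.comp P Q).C4 := by
  obtain ⟨-, -, -, hP2, -, -, hQ2, -, -, -, hPC, hQC⟩ := h
  exact TS.comp_C4 hP2 hQ2
    (TS.exists_forces_outputs_sdiff (or_iff_not_imp_left.mpr hPC))
    (TS.exists_forces_outputs_sdiff (or_iff_not_imp_left.mpr hQC))
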